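/- Let C and D be r×r real matrices with r ≥ 1 and C invertible. Then lim sup_{n→∞} | tr( C⁻¹ · (D·C⁻¹)^n · D ) |^{1/n} = ρ(D·C⁻¹), the spectral radius of the matrix D·C⁻¹, where tr denotes the trace and the lim sup is taken over n ≥ 1. -/

import Mathlib

/-!
With `A = D * C⁻¹`, cyclicity of the trace gives `tr (C⁻¹ * Aⁿ * D) = tr (Aⁿ⁺¹) = pₙ₊₁`, where
`pₖ = ∑ μᵏ` is the power sum of the complex eigenvalues of `A` counted with multiplicity. The bound
`‖pₖ‖ ≤ r ρᵏ` gives `limsup ≤ ρ`. Conversely, if the limsup were `< ρ`, then `∑ ‖pₖ‖ / ρᵏ` would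
converge, so the generating function `∑ pₖ zᵏ = ∑_μ (1 - μ z)⁻¹` would stay bounded on `‖z‖ < 1/ρ`;
but it has a pole at `z = 1/ν` for any eigenvalue `ν` of modulus `ρ`.
-/

/-- The spectral radius of a square real matrix: the maximal absolute value of
the roots in `ℂ` of its characteristic polynomial. -/
noncomputable def specRadM {r : ℕ} (M : Matrix (Fin r) (Fin r) ℝ) : ℝ :=
  ((((M.charpoly.map (algebraMap ℝ ℂ)).roots.map fun z => ‖z‖₊).sup : NNReal) : ℝ)

open Polynomial Filter Topology

namespace Matrix
variable {n K : Type*} [Fintype n] [DecidableEq n] [Field K] [IsAlgClosed K]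

lemma card_roots_charpoly (A : Matrix n n K) : A.charpoly.roots.card = Fintype.card n := by
  rw [IsAlgClosed.card_roots_eq_natDegree, charpoly_natDegree_eq_dim]

lemma det_sub_scalar_eq_prod_roots_charpoly (A : Matrix n n K) (w : K) :
    (A - scalar n w).det = (A.charpoly.roots.map (· - w)).prod := by
  have hs : A.charpoly.Splits := IsAlgClosed.splits _
  have h := hs.eval_eq_prod_roots_of_monic A.charpoly_monic w
  rw [eval_charpoly] at h
  rw [← neg_sub, det_neg, h, ← card_roots_charpoly A, ← Multiset.card_map (w - ·),
    ← Multiset.prod_map_neg, Multiset.map_map]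
  simp

lemma det_aeval_eq_prod_roots_charpoly (A : Matrix n n K) (p : K[X]) :
    (aeval A p).det = (A.charpoly.roots.map p.eval).prod := by
  have hs : p.Splits := IsAlgClosed.splits _
  -- Both sides are multiplicative in `p`; compare them on the linear factors of `p`.
  have hlin : ∀ w, (aeval A (X - C w)).det = (A.charpoly.roots.map (· - w)).prod := fun w => by
    rw [map_sub, aeval_X, aeval_C, ← det_sub_scalar_eq_prod_roots_charpoly]; rfl
  have heval : ∀ μ, p.eval μ = p.leadingCoeff * (p.roots.map (μ - ·)).prod :=
    hs.eval_eq_prod_roots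
  have hdet : ∀ q : K[X], (aeval A q).det = detMonoidHom.comp (aeval A).toMonoidHom q :=
    fun _ => rfl
  conv_lhs => rw [hs.eq_prod_roots]
  rw [map_mul, det_mul, aeval_C, algebraMap_eq_diagonal, det_diagonal, hdet, map_multiset_prod,
    Multiset.map_map]
  simp only [Function.comp_def, ← hdet, hlin, heval, Pi.algebraMap_apply, Algebra.algebraMap_self,
    RingHom.id_apply, Finset.prod_const, Finset.card_univ]
  rw [Multiset.prod_map_mul, Multiset.map_const', Multiset.prod_replicate, card_roots_charpoly,
    Multiset.prod_map_prod_map]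

lemma charpoly_pow_eq_prod_roots_charpoly (A : Matrix n n K) (k : ℕ) :
    (A ^ k).charpoly = ((A.charpoly.roots.map (· ^ k)).map fun a => X - C a).prod := by
  refine Polynomial.funext fun z => ?_
  have : scalar n z - A ^ k = aeval A (C z - X ^ k) := by
    rw [map_sub, aeval_C, map_pow, aeval_X]; rfl
  rw [eval_charpoly, this, det_aeval_eq_prod_roots_charpoly, eval_multiset_prod, Multiset.map_map,
    Multiset.map_map]
  simp

lemma trace_pow_eq_sum_roots_charpoly (A : Matrix n n K) (k : ℕ) :
    (A ^ k).trace = (A.charpoly.roots.map (· ^ k)).sum := by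
  rw [trace_eq_sum_roots_charpoly, charpoly_pow_eq_prod_roots_charpoly,
    roots_multiset_prod_X_sub_C]

lemma algebraMap_trace_pow_eq_sum_aroots_charpoly {F : Type*} [Field F] [Algebra F K]
    (A : Matrix n n F) (k : ℕ) :
    algebraMap F K (A ^ k).trace = ((A.charpoly.aroots K).map (· ^ k)).sum := by
  rw [AddMonoidHom.map_trace, Matrix.map_pow, trace_pow_eq_sum_roots_charpoly, charpoly_map,
    aroots_def]

end Matrix

lemma rpow_one_div_le_of_le_mul_pow {u K ρ : ℝ} (hu : 0 ≤ u) (hK : 0 ≤ K) (hρ : 0 ≤ ρ) {n : ℕ}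
    (hn : n ≠ 0) (h : u ≤ K * ρ ^ n) : u ^ ((1 : ℝ) / n) ≤ K ^ ((1 : ℝ) / n) * ρ := by
  calc u ^ ((1 : ℝ) / n) ≤ (K * ρ ^ n) ^ ((1 : ℝ) / n) := by gcongr
    _ = K ^ ((1 : ℝ) / n) * ρ := by
      rw [Real.mul_rpow hK (by positivity), one_div, Real.pow_rpow_inv_natCast hρ hn]

lemma tendsto_const_rpow_one_div_natCast {K : ℝ} (hK : 0 < K) :
    Tendsto (fun n : ℕ => K ^ ((1 : ℝ) / n)) atTop (𝓝 1) := by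
  simpa [Function.comp_def] using ((Real.continuousAt_const_rpow hK.ne').tendsto).comp
    tendsto_one_div_atTop_nhds_zero_nat

lemma summable_div_pow_of_limsup_rpow_one_div_lt {u : ℕ → ℝ} {ρ : ℝ} (hu : ∀ n, 0 ≤ u n)
    (hbdd : IsBoundedUnder (· ≤ ·) atTop fun n : ℕ => u n ^ ((1 : ℝ) / n))
    (hlt : limsup (fun n : ℕ => u n ^ ((1 : ℝ) / n)) atTop < ρ) :
    Summable fun n => u n / ρ ^ n := by
  obtain ⟨x, hx, hxρ⟩ := exists_between hlt
  have hx0 : 0 < x := (le_limsup_of_frequently_le (Frequently.of_forall fun n =>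
    Real.rpow_nonneg (hu n) _) hbdd).trans_lt hx
  have hρ : 0 < ρ := hx0.trans hxρ
  refine summable_of_isBigO_nat (summable_geometric_of_lt_one (div_nonneg hx0.le hρ.le)
    ((div_lt_one hρ).2 hxρ)) (Asymptotics.IsBigO.of_bound 1 ?_)
  filter_upwards [eventually_lt_of_limsup_lt hx hbdd, eventually_ne_atTop 0] with n hn hn0
  rw [one_div, Real.rpow_inv_lt_iff_of_pos (hu n) hx0.le (by positivity), Real.rpow_natCast] at hn
  rw [one_mul, div_pow, Real.norm_of_nonneg (div_nonneg (hu n) (by positivity)),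
    Real.norm_of_nonneg (by positivity)]
  gcongr

lemma limsup_rpow_one_div_eq_of_le_mul_pow {u : ℕ → ℝ} {K ρ : ℝ} (hu : ∀ n, 0 ≤ u n) (hK : 0 < K)
    (hρ : 0 ≤ ρ) (hle : ∀ n, u n ≤ K * ρ ^ n) (hns : ¬ Summable fun n => u n / ρ ^ n) :
    limsup (fun n : ℕ => u n ^ ((1 : ℝ) / n)) atTop = ρ := by
  have hbound : Tendsto (fun n : ℕ => K ^ ((1 : ℝ) / n) * ρ) atTop (𝓝 ρ) := by
    simpa using (tendsto_const_rpow_one_div_natCast hK).mul_const ρ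
  have hle' : ∀ᶠ n : ℕ in atTop, u n ^ ((1 : ℝ) / n) ≤ K ^ ((1 : ℝ) / n) * ρ := by
    filter_upwards [eventually_ne_atTop 0] with n hn
      using rpow_one_div_le_of_le_mul_pow (hu n) hK.le hρ hn (hle n)
  have hbdd : IsBoundedUnder (· ≤ ·) atTop fun n : ℕ => u n ^ ((1 : ℝ) / n) :=
    hbound.isBoundedUnder_le.mono_le hle'
  refine le_antisymm ?_ (not_lt.1 fun hlt =>
    hns (summable_div_pow_of_limsup_rpow_one_div_lt hu hbdd hlt))
  calc limsup (fun n : ℕ => u n ^ ((1 : ℝ) / n)) atTop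
      ≤ limsup (fun n : ℕ => K ^ ((1 : ℝ) / n) * ρ) atTop :=
        limsup_le_limsup hle' (isCoboundedUnder_le_of_le atTop fun n => Real.rpow_nonneg (hu n) _)
          hbound.isBoundedUnder_le
    _ = ρ := hbound.limsup_eq

namespace Multiset

variable {𝕜 : Type*}

lemma norm_sum_map_pow_le [NormedDivisionRing 𝕜] {m : Multiset 𝕜} {ρ : ℝ} (h : ∀ μ ∈ m, ‖μ‖ ≤ ρ)
    (k : ℕ) :
    ‖(m.map (· ^ k)).sum‖ ≤ card m * ρ ^ k := by
  calc ‖(m.map (· ^ k)).sum‖ ≤ (m.map fun μ => ‖μ‖ ^ k).sum := by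
        simpa [Function.comp_def] using norm_multiset_sum_le (m.map (· ^ k))
    _ ≤ card m * ρ ^ k := by
      simpa using sum_le_card_nsmul (m.map fun μ => ‖μ‖ ^ k) (ρ ^ k) (by
        simp only [mem_map, forall_exists_index, and_imp, forall_apply_eq_imp_iff₂]
        exact fun μ hμ => pow_le_pow_left₀ (norm_nonneg μ) (h μ hμ) k)

lemma hasSum_sum_map_pow_mul_pow [NormedField 𝕜] [CompleteSpace 𝕜] {m : Multiset 𝕜} {z : 𝕜}
    (h : ∀ μ ∈ m, ‖μ * z‖ < 1) :
    HasSum (fun n => (m.map (· ^ n)).sum * z ^ n) (m.map fun μ => (1 - μ * z)⁻¹).sum := by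
  induction m using Multiset.induction_on with
  | empty => simp
  | cons μ m ih =>
    simp only [map_cons, sum_cons, add_mul, ← mul_pow]
    exact (hasSum_geometric_of_norm_lt_one (h μ (mem_cons_self μ m))).add
      (ih fun ν hν => h ν (mem_cons_of_mem hν))

section RCLike
variable [RCLike 𝕜]

lemma tendsto_one_sub_mul_inv_one_sub_mul_div {μ ν : 𝕜} (hν : ν ≠ 0) :
    Tendsto (fun s : ℝ => (1 - s : 𝕜) * (1 - μ * (s / ν))⁻¹) (𝓝[<] 1)
      (𝓝 (if μ = ν then 1 else 0)) := by
  split_ifs with hμ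
  · subst hμ
    refine tendsto_const_nhds.congr' ?_
    filter_upwards [self_mem_nhdsWithin] with s hs
    have : (1 - s : 𝕜) ≠ 0 := by exact_mod_cast (sub_pos.2 hs).ne'
    rw [mul_div_cancel₀ _ hν, mul_inv_cancel₀ this]
  · have hden : 1 - μ * ((1 : ℝ) / ν : 𝕜) ≠ 0 := by
      rw [RCLike.ofReal_one, mul_one_div, sub_ne_zero, ne_eq, eq_div_iff hν, one_mul]
      exact Ne.symm hμ
    have hcont : ContinuousAt (fun s : ℝ => (1 - s : 𝕜) * (1 - μ * (s / ν))⁻¹) 1 := by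
      fun_prop (disch := exact hden)
    simpa using hcont.tendsto.mono_left nhdsWithin_le_nhds

lemma tendsto_one_sub_mul_sum_map_inv {ν : 𝕜} (hν : ν ≠ 0) (m : Multiset 𝕜) :
    Tendsto (fun s : ℝ => (1 - s : 𝕜) * (m.map fun μ => (1 - μ * (s / ν))⁻¹).sum) (𝓝[<] 1)
      (𝓝 (m.count ν)) := by
  induction m using Multiset.induction_on with
  | empty => simp
  | cons μ m ih =>
    simp only [map_cons, sum_cons, mul_add, count_cons, Nat.cast_add, Nat.cast_ite, Nat.cast_one,
      Nat.cast_zero, eq_comm (a := ν)]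
    rw [add_comm]
    exact (tendsto_one_sub_mul_inv_one_sub_mul_div hν).add ih

lemma not_summable_norm_sum_map_pow_div_pow {m : Multiset 𝕜} {ν : 𝕜} (hνm : ν ∈ m) (hν : ν ≠ 0)
    (hmax : ∀ μ ∈ m, ‖μ‖ ≤ ‖ν‖) :
    ¬ Summable fun n => ‖(m.map (· ^ n)).sum‖ / ‖ν‖ ^ n := by
  intro hsum
  -- `F s = ∑ pₙ (s / ν)ⁿ` is bounded on `0 < s < 1`, but its `ν`-terms have a pole at `s = 1`.
  set F : ℝ → 𝕜 := fun s => (m.map fun μ => (1 - μ * (s / ν))⁻¹).sum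
  have hF : ∀ s ∈ Set.Ioo (0 : ℝ) 1, ‖F s‖ ≤ ∑' n, ‖(m.map (· ^ n)).sum‖ / ‖ν‖ ^ n := by
    rintro s ⟨hs0, hs1⟩
    have hz : ‖(s / ν : 𝕜)‖ = s / ‖ν‖ := by
      rw [norm_div, RCLike.norm_ofReal, abs_of_pos hs0]
    refine (hasSum_sum_map_pow_mul_pow (z := (s : 𝕜) / ν) fun μ hμ => ?_).norm_le_of_bounded
      hsum.hasSum fun n => ?_
    · rw [norm_mul, hz]
      calc ‖μ‖ * (s / ‖ν‖) ≤ ‖ν‖ * (s / ‖ν‖) := by gcongr; exact hmax μ hμ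
        _ = s := by field_simp
        _ < 1 := hs1
    · rw [norm_mul, norm_pow, hz, div_pow, mul_div, div_le_div_iff_of_pos_right (by positivity)]
      exact mul_le_of_le_one_right (norm_nonneg _) (pow_le_one₀ hs0.le hs1.le)
  have hzero : Tendsto (fun s : ℝ => (1 - s : 𝕜) * F s) (𝓝[<] 1) (𝓝 0) := by
    apply squeeze_zero_norm' (a := fun s => (1 - s) * ∑' n, ‖(m.map (· ^ n)).sum‖ / ‖ν‖ ^ n)
    · filter_upwards [Ioo_mem_nhdsLT zero_lt_one] with s hs
      rw [norm_mul, ← RCLike.ofReal_one, ← RCLike.ofReal_sub, RCLike.norm_ofReal,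
        abs_of_nonneg (sub_nonneg.2 hs.2.le)]
      exact mul_le_mul_of_nonneg_left (hF s hs) (sub_nonneg.2 hs.2.le)
    · have : Continuous fun s : ℝ => (1 - s) * ∑' n, ‖(m.map (· ^ n)).sum‖ / ‖ν‖ ^ n := by
        fun_prop
      simpa using this.tendsto 1 |>.mono_left nhdsWithin_le_nhds
  have hcount := tendsto_nhds_unique (tendsto_one_sub_mul_sum_map_inv hν m) hzero
  exact (count_pos.2 hνm).ne' (Nat.cast_eq_zero.1 hcount)

lemma limsup_norm_sum_map_pow_succ_rpow_eq_sup (m : Multiset 𝕜) :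
    limsup (fun n : ℕ => ‖(m.map (· ^ (n + 1))).sum‖ ^ ((1 : ℝ) / n)) atTop =
      ((m.map (‖·‖₊)).sup : ℝ) := by
  by_cases h0 : ∀ μ ∈ m, μ = 0
  · have hsup : (m.map (‖·‖₊)).sup = 0 :=
      le_antisymm (sup_le.2 fun x hx => by obtain ⟨μ, hμ, rfl⟩ := mem_map.1 hx; simp [h0 μ hμ])
        bot_le
    have hsum : ∀ n : ℕ, (m.map (· ^ (n + 1))).sum = 0 := fun n =>
      sum_eq_zero (by simpa using fun μ hμ => h0 μ hμ)
    rw [hsup, NNReal.coe_zero, ← limsup_const (f := (atTop : Filter ℕ)) (0 : ℝ)]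
    refine limsup_congr ?_
    filter_upwards [eventually_ne_atTop 0] with n hn
    rw [hsum, norm_zero, Real.zero_rpow (by positivity)]
  push Not at h0
  obtain ⟨μ, hμm, hμ⟩ := h0
  obtain ⟨ν, hνm, hmax⟩ := m.toFinset.exists_max_image (‖·‖) ⟨μ, mem_toFinset.2 hμm⟩
  simp only [mem_toFinset] at hνm hmax
  have hν : ν ≠ 0 := norm_pos_iff.1 ((norm_pos_iff.2 hμ).trans_le (hmax μ hμm))
  have hsup : (m.map (‖·‖₊)).sup = ‖ν‖₊ :=
    le_antisymm (sup_le.2 fun x hx => by obtain ⟨μ, hμ, rfl⟩ := mem_map.1 hx; exact hmax μ hμ)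
      (le_sup (mem_map_of_mem _ hνm))
  have hcard : (0 : ℝ) < card m := by exact_mod_cast card_pos_iff_exists_mem.2 ⟨μ, hμm⟩
  rw [hsup, coe_nnnorm]
  refine limsup_rpow_one_div_eq_of_le_mul_pow (K := card m * ‖ν‖) (fun n => norm_nonneg _)
    (by positivity) (norm_nonneg _) (fun n => ?_) fun hs => ?_
  · simpa [pow_succ, mul_assoc, mul_comm (‖ν‖)] using norm_sum_map_pow_le hmax (n + 1)
  · refine not_summable_norm_sum_map_pow_div_pow hνm hν hmax ((summable_nat_add_iff 1).1 ?_)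
    simpa [pow_succ, div_div] using hs.div_const ‖ν‖

end RCLike

end Multiset

open Matrix in
theorem limsup_abs_trace_inv_mul_pow_mul_rpow_eq_spectralRadius_general
    {r : ℕ} (C D : Matrix (Fin r) (Fin r) ℝ) :
    Filter.limsup
      (fun n : ℕ =>
        |Matrix.trace (C⁻¹ * (D * C⁻¹) ^ n * D)| ^ ((1 : ℝ) / n))
      Filter.atTop = specRadM (D * C⁻¹) := by
  have htrace : ∀ n : ℕ, |trace (C⁻¹ * (D * C⁻¹) ^ n * D)| =
      ‖(((D * C⁻¹).charpoly.aroots ℂ).map (· ^ (n + 1))).sum‖ := fun n => by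
    rw [trace_mul_comm, ← mul_assoc, ← pow_succ', ← algebraMap_trace_pow_eq_sum_aroots_charpoly,
      Complex.coe_algebraMap, Complex.norm_real, Real.norm_eq_abs]
  simp_rw [htrace]
  exact Multiset.limsup_norm_sum_map_pow_succ_rpow_eq_sup _

/-- For `C` invertible,
`limsup_n |tr(C⁻¹·(D·C⁻¹)^n·D)|^{1/n} = ρ(D·C⁻¹)`. -/
theorem limsup_abs_trace_inv_mul_pow_mul_rpow_eq_spectralRadius
    {r : ℕ} (hr : 1 ≤ r) (C D : Matrix (Fin r) (Fin r) ℝ)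
    (hC : IsUnit C.det) :
    Filter.limsup
      (fun n : ℕ =>
        |Matrix.trace (C⁻¹ * (D * C⁻¹) ^ n * D)| ^ ((1 : ℝ) / n))
      Filter.atTop = specRadM (D * C⁻¹) :=
  limsup_abs_trace_inv_mul_pow_mul_rpow_eq_spectralRadius_general C D
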